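/- arXiv:1507.02232 — 3 statements merged into one kernel-verified Lean document; each statement's English description precedes it below -/
import Mathlib

section
/- Let p be an odd prime, X = ℤ/pℤ, and s,t ∈ ℤ/pℤ nonzero elements with s·t ≠ 1, and let σ(x,y) = (s·y, t·x + (1−s·t)·y) be the Alexander biquandle on X. Then for every group H, every type I non-commutative 2-cocycle f : X×X → H is cohomologous to the constant cocycle with value 1. In particular, every type I non-commutative 2-cocycle on the dihedral quandle solution D_3 (σ(x,y) = (y, 2y−x) on ℤ/3ℤ) is cohomologous to the trivial one. -/
/-- The map `σ × id` acting on the first two coordinates of `X × X × X`. -/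
def mapL {X : Type*} (σ : X × X → X × X) : X × X × X → X × X × X :=
  fun p => ((σ (p.1, p.2.1)).1, (σ (p.1, p.2.1)).2, p.2.2)

/-- The map `id × σ` acting on the last two coordinates of `X × X × X`. -/
def mapR {X : Type*} (σ : X × X → X × X) : X × X × X → X × X × X :=
  fun p => (p.1, σ p.2)

/-- The Yang–Baxter equation `(id×σ)(σ×id)(id×σ) = (σ×id)(id×σ)(σ×id)`. -/
def YBeq {X : Type*} (σ : X × X → X × X) : Prop :=
  mapR σ ∘ mapL σ ∘ mapR σ = mapL σ ∘ mapR σ ∘ mapL σ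

/-- A set-theoretic solution of the Yang–Baxter equation. -/
def IsYBSol {X : Type*} (σ : X × X → X × X) : Prop :=
  Function.Bijective σ ∧ YBeq σ

/-- Non-degeneracy (left and right invertibility). -/
def IsNondeg {X : Type*} (σ : X × X → X × X) : Prop :=
  (∀ x z : X, ∃! y : X, (σ (x, y)).1 = z) ∧
  (∀ y t : X, ∃! x : X, (σ (x, y)).2 = t)

/-- A birack: non-degenerate set-theoretic solution of the YBeq. -/
def IsBirack {X : Type*} (σ : X × X → X × X) : Prop :=
  IsYBSol σ ∧ IsNondeg σ

/-- A biquandle: a birack where every `x` has a unique `y` with `σ (x,y) = (x,y)`. -/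
def IsBiquandle {X : Type*} (σ : X × X → X × X) : Prop :=
  IsBirack σ ∧ ∀ x : X, ∃! y : X, σ (x, y) = (x, y)

/-- `s` is the associated map of a biquandle: `σ (x, s x) = (x, s x)`. -/
def IsAssocMap {X : Type*} (σ : X × X → X × X) (s : X → X) : Prop :=
  ∀ x : X, σ (x, s x) = (x, s x)

/-- A (braid) non-commutative 2-cocycle on `(X,σ)` with values in a group `H`. -/
def IsCocycle {X H : Type*} [Group H] (σ : X × X → X × X) (f : X × X → H) : Prop :=
  (∀ x y z : X, f (x, y) * f ((σ (x, y)).2, z) =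
      f (x, (σ (y, z)).1) * f ((σ (x, (σ (y, z)).1)).2, (σ (y, z)).2)) ∧
  (∀ x y z : X, f ((σ (x, y)).1, (σ ((σ (x, y)).2, z)).1) = f (y, z))

/-- Type I condition: `f (x, s x) = 1`. -/
def IsTypeI {X H : Type*} [Group H] (s : X → X) (f : X × X → H) : Prop :=
  ∀ x : X, f (x, s x) = 1

/-- Two 2-cocycles are cohomologous. -/
def Cohomologous {X H : Type*} [Group H] (σ : X × X → X × X) (s : X → X)
    (f f' : X × X → H) : Prop :=
  ∃ γ : X → H, (∀ x : X, γ x = γ (s x)) ∧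
    ∀ p : X × X, f' p = γ p.1 * f p * (γ (σ p).2)⁻¹

/-- Relations defining the universal non-commutative 2-cocycle group. -/
def UncRels {X : Type*} (σ : X × X → X × X) (s : X → X) : Set (FreeGroup (X × X)) :=
  {r | (∃ x y z : X, r = FreeGroup.of (x, y) * FreeGroup.of ((σ (x, y)).2, z) *
          (FreeGroup.of (x, (σ (y, z)).1) *
            FreeGroup.of ((σ (x, (σ (y, z)).1)).2, (σ (y, z)).2))⁻¹) ∨
       (∃ x y z : X, r = FreeGroup.of ((σ (x, y)).1, (σ ((σ (x, y)).2, z)).1) *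
          (FreeGroup.of (y, z))⁻¹) ∨
       (∃ x : X, r = FreeGroup.of (x, s x))}

/-- The universal non-commutative 2-cocycle group `U_nc(X,σ)`. -/
abbrev Unc {X : Type*} (σ : X × X → X × X) (s : X → X) : Type _ :=
  PresentedGroup (UncRels σ s)

/-- The universal 2-cocycle `π : X × X → U_nc(X,σ)`. -/
def UncPi {X : Type*} (σ : X × X → X × X) (s : X → X) : X × X → Unc σ s :=
  fun p => PresentedGroup.of (rels := UncRels σ s) p

universe v

/-!
Conjugating a type I cocycle `f` of the Alexander biquandle by the gauge `γ x = f (0, x / (1 - st))`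
yields a type I cocycle `g` with `g (0, y) = 1`. Two instances of the braid relation, chosen so
that a middle argument becomes `0`, then show that `B ↦ g (A, B)` is periodic with period
`s⁻¹ A`. Over `ℤ/pℤ` a nonzero period forces this function to be constant, so
`g (A, B) = g (A, s⁻¹ A) = 1`.
-/

section Twist

variable {X H : Type*} [Group H]

def BraidRelation (σ : X × X → X × X) (f : X × X → H) : Prop :=
  ∀ x y z : X, f (x, y) * f ((σ (x, y)).2, z) =
    f (x, (σ (y, z)).1) * f ((σ (x, (σ (y, z)).1)).2, (σ (y, z)).2)

def twist (σ : X × X → X × X) (γ : X → H) (f : X × X → H) : X × X → H :=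
  fun q => γ q.1 * f q * (γ (σ q).2)⁻¹

lemma YBeq.snd_snd {σ : X × X → X × X} (hσ : YBeq σ) (x y z : X) :
    (σ ((σ (x, y)).2, z)).2 = (σ ((σ (x, (σ (y, z)).1)).2, (σ (y, z)).2)).2 :=
  (congrArg (fun q => q.2.2) (congrFun hσ (x, y, z))).symm

lemma braidRelation_twist {σ : X × X → X × X} {f : X × X → H} (hf : BraidRelation σ f)
    (hσ : YBeq σ) (γ : X → H) : BraidRelation σ (twist σ γ f) := by
  intro x y z
  calc twist σ γ f (x, y) * twist σ γ f ((σ (x, y)).2, z)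
      = γ x * (f (x, y) * f ((σ (x, y)).2, z)) * (γ (σ ((σ (x, y)).2, z)).2)⁻¹ := by
        simp only [twist]; group
    _ = γ x * (f (x, (σ (y, z)).1) * f ((σ (x, (σ (y, z)).1)).2, (σ (y, z)).2)) *
          (γ (σ ((σ (x, (σ (y, z)).1)).2, (σ (y, z)).2)).2)⁻¹ := by
        rw [hf x y z, hσ.snd_snd]
    _ = _ := by simp only [twist]; group

lemma isTypeI_twist {σ : X × X → X × X} {s : X → X} {f : X × X → H} (hf : IsTypeI s f)
    (hs : IsAssocMap σ s) {γ : X → H} (hγ : ∀ x, γ x = γ (s x)) :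
    IsTypeI s (twist σ γ f) := by
  intro x
  simp only [twist, hs x, hf x, mul_one, ← hγ x, mul_inv_cancel]

end Twist

section Alexander

variable {H : Type*} [Group H]

def alexander {R : Type*} [CommRing R] (s t : R) : R × R → R × R :=
  fun q => (s * q.2, t * q.1 + (1 - s * t) * q.2)

lemma alexander_ybeq {R : Type*} [CommRing R] (s t : R) : YBeq (alexander s t) := by
  funext ⟨x, y, z⟩
  ext <;> simp only [Function.comp, mapL, mapR, alexander] <;> ring

variable {F : Type*} [Field F] {s t : F}

lemma alexander_isAssocMap (hs : s ≠ 0) : IsAssocMap (alexander s t) (fun x => s⁻¹ * x) := by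
  intro x
  simp only [alexander, Prod.mk.injEq]
  constructor
  · field_simp
  · field_simp
    ring

lemma BraidRelation.alexander_periodic (hs : s ≠ 0) (ht : t ≠ 0) (hst : s * t ≠ 1)
    {g : F × F → H} (hg : BraidRelation (alexander s t) g) (h0 : ∀ y, g (0, y) = 1) (A : F) :
    Function.Periodic (fun B => g (A, B)) (s⁻¹ * A) := by
  intro B
  have ha : 1 - s * t ≠ 0 := sub_ne_zero.mpr hst.symm
  set a := 1 - s * t
  -- `x` makes the second coordinate of `σ (x, s * B)` vanish, where `g (0, _) = 1`.
  set x := -(a * s * B) / t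
  set u := a⁻¹ * A + s * B
  have hx : t * x + a * (s * B) = 0 := by simp only [x]; field_simp; ring
  have hxu : t * x + a * u = A := by simp only [x, u]; field_simp; ring
  have hshift : t * (s * B) + a * (s⁻¹ * u) = B + s⁻¹ * A := by
    simp only [u]; field_simp; simp only [a]; ring
  have h₁ : g (x, u) * g (t * x + a * u, B) =
      g (x, s * B) * g (t * x + a * (s * B), t * u + a * B) := hg x u B
  have h₂ : g (x, s * B) * g (t * x + a * (s * B), s⁻¹ * u) =
      g (x, s * (s⁻¹ * u)) * g (t * x + a * (s * (s⁻¹ * u)), t * (s * B) + a * (s⁻¹ * u)) :=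
    hg x (s * B) (s⁻¹ * u)
  rw [hxu, hx, h0, mul_one] at h₁
  rw [hx, h0, mul_one, mul_inv_cancel_left₀ hs, hxu, hshift] at h₂
  exact (mul_left_cancel (h₁.trans h₂)).symm

end Alexander

lemma ZMod.apply_eq_of_periodic {p : ℕ} [Fact p.Prime] {α : Type*} {g : ZMod p → α}
    {d : ZMod p} (hg : Function.Periodic g d) (hd : d ≠ 0) (x y : ZMod p) : g y = g x := by
  have hy : y = x + (((y - x) / d).val : ZMod p) * d := by
    rw [ZMod.natCast_zmod_val, div_mul_cancel₀ _ hd, add_sub_cancel]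
  rw [hy, hg.nat_mul]

section AlexanderZMod

variable {p : ℕ} [Fact p.Prime] {s t : ZMod p} {H : Type*} [Group H]

lemma BraidRelation.alexander_eq_one (hs : s ≠ 0) (ht : t ≠ 0) (hst : s * t ≠ 1)
    {g : ZMod p × ZMod p → H} (hg : BraidRelation (alexander s t) g)
    (hI : IsTypeI (fun x => s⁻¹ * x) g) (h0 : ∀ y, g (0, y) = 1) (q : ZMod p × ZMod p) :
    g q = 1 := by
  obtain ⟨A, B⟩ := q
  rcases eq_or_ne A 0 with rfl | hA
  · exact h0 B
  · rw [ZMod.apply_eq_of_periodic (hg.alexander_periodic hs ht hst h0 A)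
      (mul_ne_zero (inv_ne_zero hs) hA) (s⁻¹ * A) B]
    exact hI A

theorem alexander_cohomologous_one (hs : s ≠ 0) (ht : t ≠ 0) (hst : s * t ≠ 1)
    (f : ZMod p × ZMod p → H) (hf : IsCocycle (alexander s t) f)
    (hI : IsTypeI (fun x => s⁻¹ * x) f) :
    Cohomologous (alexander s t) (fun x => s⁻¹ * x) f (fun _ => 1) := by
  have ha : 1 - s * t ≠ 0 := sub_ne_zero.mpr hst.symm
  set γ : ZMod p → H := fun x => f (0, (1 - s * t)⁻¹ * x)
  -- The second cocycle condition at `x = 0` reads `f (s * y, s * z) = f (y, z)`.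
  have hγ : ∀ x, γ x = γ (s⁻¹ * x) := fun x => by
    have h : f (s * 0, s * ((1 - s * t)⁻¹ * (s⁻¹ * x))) = f (0, (1 - s * t)⁻¹ * (s⁻¹ * x)) :=
      hf.2 0 0 _
    rwa [mul_zero, mul_left_comm, mul_inv_cancel_left₀ hs] at h
  have h0 : ∀ y, twist (alexander s t) γ f (0, y) = 1 := fun y => by
    have hf00 : f (0, 0) = 1 := by simpa using hI 0
    simp [twist, alexander, γ, hf00, inv_mul_cancel_left₀ ha]
  exact ⟨γ, hγ, fun q => (BraidRelation.alexander_eq_one hs ht hst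
    (braidRelation_twist hf.1 (alexander_ybeq s t) γ)
    (isTypeI_twist hI (alexander_isAssocMap hs) hγ) h0 q).symm⟩

end AlexanderZMod

theorem alexander_zmod_p_cocycles_trivial_general (p : ℕ) [Fact p.Prime]
    (s t : ZMod p) (hs : s ≠ 0) (ht : t ≠ 0) (hst : s * t ≠ 1) :
    (∀ (H : Type v) [Group H] (f : ZMod p × ZMod p → H),
      IsCocycle (fun q : ZMod p × ZMod p =>
        (s * q.2, t * q.1 + (1 - s * t) * q.2)) f →
      IsTypeI (fun x : ZMod p => s⁻¹ * x) f →
      Cohomologous (fun q : ZMod p × ZMod p =>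
        (s * q.2, t * q.1 + (1 - s * t) * q.2)) (fun x : ZMod p => s⁻¹ * x)
        f (fun _ => 1)) ∧
    (∀ (H : Type v) [Group H] (f : ZMod 3 × ZMod 3 → H),
      IsCocycle (fun q : ZMod 3 × ZMod 3 => (q.2, 2 * q.2 - q.1)) f →
      IsTypeI (id : ZMod 3 → ZMod 3) f →
      Cohomologous (fun q : ZMod 3 × ZMod 3 => (q.2, 2 * q.2 - q.1))
        (id : ZMod 3 → ZMod 3) f (fun _ => 1)) := by
  refine ⟨fun H _ f => alexander_cohomologous_one hs ht hst f, fun H _ f => ?_⟩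
  have hD₃ : alexander (1 : ZMod 3) 2 = fun q => (q.2, 2 * q.2 - q.1) := by
    funext ⟨x, y⟩
    revert x y
    decide
  have hs₁ : (fun x : ZMod 3 => (1 : ZMod 3)⁻¹ * x) = id := by
    funext x
    rw [inv_one, one_mul, id]
  rw [← hD₃, ← hs₁]
  exact alexander_cohomologous_one one_ne_zero (by decide) (by decide) f

/-- For the Alexander biquandle on `ℤ/pℤ` (`p` an odd prime, `s, t ≠ 0`, `st ≠ 1`),
every type I non-commutative 2-cocycle is cohomologous to the constant cocycle `1`;
in particular this holds for the dihedral quandle solution `D_3` on `ℤ/3ℤ`. -/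
theorem alexander_zmod_p_cocycles_trivial (p : ℕ) [Fact p.Prime] (hodd : p ≠ 2)
    (s t : ZMod p) (hs : s ≠ 0) (ht : t ≠ 0) (hst : s * t ≠ 1) :
    (∀ (H : Type v) [Group H] (f : ZMod p × ZMod p → H),
      IsCocycle (fun q : ZMod p × ZMod p =>
        (s * q.2, t * q.1 + (1 - s * t) * q.2)) f →
      IsTypeI (fun x : ZMod p => s⁻¹ * x) f →
      Cohomologous (fun q : ZMod p × ZMod p =>
        (s * q.2, t * q.1 + (1 - s * t) * q.2)) (fun x : ZMod p => s⁻¹ * x)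
        f (fun _ => 1)) ∧
    (∀ (H : Type v) [Group H] (f : ZMod 3 × ZMod 3 → H),
      IsCocycle (fun q : ZMod 3 × ZMod 3 => (q.2, 2 * q.2 - q.1)) f →
      IsTypeI (id : ZMod 3 → ZMod 3) f →
      Cohomologous (fun q : ZMod 3 × ZMod 3 => (q.2, 2 * q.2 - q.1))
        (id : ZMod 3 → ZMod 3) f (fun _ => 1)) :=
  alexander_zmod_p_cocycles_trivial_general p s t hs ht hst
end

section
/- Let X = ℤ/3ℤ and σ(x,y) = (−y, x−y) (Wada's biquandle on ℤ/3ℤ, whose associated map is s(x) = −x). Then U_nc(X,σ) is isomorphic to ℤ (the infinite cyclic group). -/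
section Universal

variable {X : Type*} {σ : X × X → X × X} {s : X → X}

theorem isCocycle_uncPi : IsCocycle σ (UncPi σ s) := by
  constructor
  · intro x y z
    have h :=
      PresentedGroup.mk_eq_mk_of_mul_inv_mem (rels := UncRels σ s) (Or.inl ⟨x, y, z, rfl⟩)
    rwa [map_mul, map_mul] at h
  · intro x y z
    exact PresentedGroup.mk_eq_mk_of_mul_inv_mem (Or.inr (Or.inl ⟨x, y, z, rfl⟩))

theorem isTypeI_uncPi : IsTypeI s (UncPi σ s) :=
  fun x => PresentedGroup.one_of_mem (rels := UncRels σ s) (Or.inr (Or.inr ⟨x, rfl⟩))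

variable {H : Type*} [Group H] {f : X × X → H}

def Unc.lift (hf : IsCocycle σ f) (hfI : IsTypeI s f) : Unc σ s →* H :=
  PresentedGroup.toGroup (f := f) <| by
    rintro r (⟨x, y, z, rfl⟩ | ⟨x, y, z, rfl⟩ | ⟨x, rfl⟩) <;>
      simp only [map_mul, map_inv, FreeGroup.lift_apply_of]
    · rw [hf.1 x y z, mul_inv_cancel]
    · rw [hf.2 x y z, mul_inv_cancel]
    · exact hfI x

@[simp]
theorem Unc.lift_uncPi (hf : IsCocycle σ f) (hfI : IsTypeI s f) (p : X × X) :
    Unc.lift hf hfI (UncPi σ s p) = f p :=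
  PresentedGroup.toGroup.of _

def Unc.mulEquivMultiplicativeInt (w : X × X → ℤ)
    (hw : IsCocycle σ (Multiplicative.ofAdd ∘ w)) (hwI : IsTypeI s (Multiplicative.ofAdd ∘ w))
    (p₀ : X × X) (hp₀ : w p₀ = 1) (hgen : ∀ p, UncPi σ s p = UncPi σ s p₀ ^ w p) :
    Unc σ s ≃* Multiplicative ℤ :=
  MonoidHom.toMulEquiv (Unc.lift hw hwI) (zpowersHom _ (UncPi σ s p₀))
    (PresentedGroup.ext fun p => by
      change zpowersHom _ _ (Unc.lift hw hwI (UncPi σ s p)) = UncPi σ s p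
      rw [Unc.lift_uncPi, hgen p, Function.comp_apply, zpowersHom_apply, toAdd_ofAdd])
    (MonoidHom.ext_mint <| by simp [hp₀])

end Universal

abbrev wada : ZMod 3 × ZMod 3 → ZMod 3 × ZMod 3 := fun q => (-q.2, q.1 - q.2)

abbrev wadaAssocMap : ZMod 3 → ZMod 3 := fun x => -x

def wadaWeight (p : ZMod 3 × ZMod 3) : ℤ :=
  if p = (0, 1) ∨ p = (0, 2) then 1 else if p = (1, 1) ∨ p = (2, 2) then -1 else 0

theorem isCocycle_wadaWeight : IsCocycle wada (Multiplicative.ofAdd ∘ wadaWeight) := by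
  unfold IsCocycle; decide

theorem isTypeI_wadaWeight : IsTypeI wadaAssocMap (Multiplicative.ofAdd ∘ wadaWeight) := by
  unfold IsTypeI; decide

theorem wada_cocycle_eq_zpow {H : Type*} [Group H] {f : ZMod 3 × ZMod 3 → H}
    (hf : IsCocycle wada f) (hfI : IsTypeI wadaAssocMap f) (p : ZMod 3 × ZMod 3) :
    f p = f (0, 1) ^ wadaWeight p := by
  have h00 := hfI 0
  have h12 := hfI 1
  have h21 := hfI 2
  have h20 := hf.1 0 1 0
  have h10 := hf.2 0 2 0
  have h02 := hf.2 0 0 1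
  have h11 := hf.1 1 1 1
  have h22 := hf.2 0 1 1
  dsimp only at h00 h12 h21 h20 h10 h02 h11 h22
  reduce_mod_char at h00 h12 h21 h20 h10 h02 h11 h22
  rw [h00, one_mul, mul_eq_left] at h20
  rw [h20] at h10
  rw [h12, h20, mul_one, mul_eq_one_iff_eq_inv] at h11
  rw [h11] at h22
  have cases : ∀ a : ZMod 3, a = 0 ∨ a = 1 ∨ a = 2 := by decide
  obtain ⟨x, y⟩ := p
  rcases cases x with rfl | rfl | rfl <;> rcases cases y with rfl | rfl | rfl <;>
    simp +decide [wadaWeight, *]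

/-- For Wada's biquandle `σ(x,y) = (−y, x−y)` on `ℤ/3ℤ` (associated map `s(x) = −x`),
`U_nc` is infinite cyclic. -/
theorem unc_wada_zmod3 :
    Nonempty (Unc (fun q : ZMod 3 × ZMod 3 => (-q.2, q.1 - q.2))
      (fun x : ZMod 3 => -x) ≃* Multiplicative ℤ) :=
  ⟨Unc.mulEquivMultiplicativeInt wadaWeight isCocycle_wadaWeight isTypeI_wadaWeight (0, 1) rfl
    (wada_cocycle_eq_zpow isCocycle_uncPi isTypeI_uncPi)⟩
end

section
/- Let X = ℤ/3ℤ and σ̄(x,y) = (y−x, −x) (the inverse of Wada's biquandle σ(x,y) = (−y, x−y) on ℤ/3ℤ; its associated map is s(x) = −x). Then U_nc(X,σ̄) is isomorphic to ℤ/3ℤ (the cyclic group of order 3). -/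
/-!
Relation (Unc2) says that `π (a, b)` depends only on `a + b`, so `U_nc` is generated by the
elements `π (0, c)`. Relation (Unc1) with first entry `0` reads
`π (0, y) * π (0, z) = π (0, z - y) * π (0, -y)`; together with `π (0, 0) = 1` from (Unc3) this
gives `π (0, -y) = π (0, y) ^ 2` and `π (0, y) ^ 3 = 1`. Over `ℤ/3ℤ` the group is therefore
generated by `π (0, 1)`, of order dividing `3`, and the type I cocycle `(a, b) ↦ a + b` shows that
the order is exactly `3`.
-/

namespace Unc

variable {X : Type*} {σ : X × X → X × X} {s : X → X}

theorem uncPi_isCocycle : IsCocycle σ (UncPi σ s) :=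
  ⟨fun x y z => PresentedGroup.mk_eq_mk_of_mul_inv_mem (Or.inl ⟨x, y, z, rfl⟩),
    fun x y z => PresentedGroup.mk_eq_mk_of_mul_inv_mem (Or.inr (Or.inl ⟨x, y, z, rfl⟩))⟩

theorem uncPi_isTypeI : IsTypeI s (UncPi σ s) :=
  fun x => PresentedGroup.one_of_mem (Or.inr (Or.inr ⟨x, rfl⟩))

def lift_s18 {H : Type*} [Group H] {f : X × X → H} (hf : IsCocycle σ f) (hs : IsTypeI s f) :
    Unc σ s →* H :=
  PresentedGroup.toGroup (f := f) <| by
    rintro r (⟨x, y, z, rfl⟩ | ⟨x, y, z, rfl⟩ | ⟨x, rfl⟩) <;>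
      simp only [map_mul, map_inv, FreeGroup.lift_apply_of]
    · rw [hf.1, mul_inv_cancel]
    · rw [hf.2, mul_inv_cancel]
    · exact hs x

@[simp]
theorem lift_uncPi_s18 {H : Type*} [Group H] {f : X × X → H} (hf : IsCocycle σ f)
    (hs : IsTypeI s f) (p : X × X) : lift_s18 hf hs (UncPi σ s p) = f p :=
  PresentedGroup.toGroup.of _

end Unc

def wadaInv (A : Type*) [AddCommGroup A] : A × A → A × A := fun q => (q.2 - q.1, -q.1)

section WadaInv

variable {A : Type*} [AddCommGroup A]

theorem uncPi_wadaInv (s : A → A) (a b : A) :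
    UncPi (wadaInv A) s (a, b) = UncPi (wadaInv A) s (0, a + b) := by
  simpa [wadaInv, add_comm] using ((Unc.uncPi_isCocycle (σ := wadaInv A) (s := s)).2 a a b).symm

theorem uncPi_wadaInv_zero_mul (s : A → A) (y z : A) :
    UncPi (wadaInv A) s (0, y) * UncPi (wadaInv A) s (0, z) =
      UncPi (wadaInv A) s (0, z - y) * UncPi (wadaInv A) s (0, -y) := by
  simpa [wadaInv] using (Unc.uncPi_isCocycle (σ := wadaInv A) (s := s)).1 0 y z

theorem uncPi_wadaInv_zero_zero : UncPi (wadaInv A) Neg.neg (0, 0) = 1 := by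
  simpa using Unc.uncPi_isTypeI (σ := wadaInv A) (s := Neg.neg) (0 : A)

theorem uncPi_wadaInv_zero_neg (y : A) :
    UncPi (wadaInv A) Neg.neg (0, -y) = UncPi (wadaInv A) Neg.neg (0, y) ^ 2 := by
  simpa [uncPi_wadaInv_zero_zero, sq] using (uncPi_wadaInv_zero_mul Neg.neg y y).symm

theorem uncPi_wadaInv_zero_pow_three (y : A) :
    UncPi (wadaInv A) Neg.neg (0, y) ^ 3 = 1 := by
  have h := uncPi_wadaInv_zero_mul Neg.neg y 0
  rw [uncPi_wadaInv_zero_zero, mul_one, zero_sub, uncPi_wadaInv_zero_neg, ← pow_add,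
    pow_add _ 1 3, pow_one, left_eq_mul] at h
  exact h

theorem isTypeI_neg_ofAdd_add :
    IsTypeI (Neg.neg : A → A) fun p => Multiplicative.ofAdd (p.1 + p.2) :=
  fun x => by simp

end WadaInv

section ZMod3

local notation "π" => UncPi (wadaInv (ZMod 3)) Neg.neg

theorem uncPi_wadaInv_zmod3 (p : ZMod 3 × ZMod 3) : π p = π (0, 1) ^ (p.1 + p.2).val := by
  rw [uncPi_wadaInv]
  generalize p.1 + p.2 = c
  fin_cases c
  · exact uncPi_wadaInv_zero_zero
  · exact (pow_one _).symm
  · exact uncPi_wadaInv_zero_neg (1 : ZMod 3)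

theorem mem_zpowers_uncPi_wadaInv_zmod3 (u : Unc (wadaInv (ZMod 3)) Neg.neg) :
    u ∈ Subgroup.zpowers (π (0, 1)) :=
  PresentedGroup.generated_by _ _
    (fun p => show π p ∈ _ from
      uncPi_wadaInv_zmod3 p ▸ Subgroup.pow_mem _ (Subgroup.mem_zpowers _) _) u

theorem isCocycle_wadaInv_zmod3_ofAdd_add :
    IsCocycle (wadaInv (ZMod 3)) fun p => Multiplicative.ofAdd (p.1 + p.2) := by
  constructor <;> decide

def wadaInvZMod3SumHom : Unc (wadaInv (ZMod 3)) Neg.neg →* Multiplicative (ZMod 3) :=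
  Unc.lift_s18 isCocycle_wadaInv_zmod3_ofAdd_add isTypeI_neg_ofAdd_add

theorem wadaInvZMod3SumHom_bijective : Function.Bijective wadaInvZMod3SumHom := by
  have hg : wadaInvZMod3SumHom (π (0, 1)) = Multiplicative.ofAdd 1 := by
    simp [wadaInvZMod3SumHom]
  refine ⟨(injective_iff_map_eq_one _).mpr fun u hu => ?_, fun c => ?_⟩
  · obtain ⟨k, rfl⟩ := Subgroup.mem_zpowers_iff.mp (mem_zpowers_uncPi_wadaInv_zmod3 u)
    rw [map_zpow, hg, ← ofAdd_zsmul, zsmul_one, ofAdd_eq_one,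
      ZMod.intCast_zmod_eq_zero_iff_dvd] at hu
    exact orderOf_dvd_iff_zpow_eq_one.mp <| (Int.natCast_dvd_natCast.mpr <|
      orderOf_dvd_of_pow_eq_one (uncPi_wadaInv_zero_pow_three 1)).trans hu
  · refine ⟨π (0, 1) ^ (Multiplicative.toAdd c).val, ?_⟩
    rw [map_pow, hg, ← ofAdd_nsmul, nsmul_one, ZMod.natCast_zmod_val, ofAdd_toAdd]

end ZMod3

/-- For the inverse of Wada's biquandle, `σ̄(x,y) = (y−x, −x)` on `ℤ/3ℤ`
(associated map `s(x) = −x`), `U_nc` is cyclic of order 3. -/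
theorem unc_wada_inverse_zmod3 :
    Nonempty (Unc (fun q : ZMod 3 × ZMod 3 => (q.2 - q.1, -q.1))
      (fun x : ZMod 3 => -x) ≃* Multiplicative (ZMod 3)) :=
  ⟨MulEquiv.ofBijective wadaInvZMod3SumHom wadaInvZMod3SumHom_bijective⟩
end
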